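/- arXiv:2308.08646 — 2 statements merged into one kernel-verified Lean document; each statement's English description precedes it below -/
import Mathlib

section
/- For constants c ∈ ℝ and r₂ > r₁ > 1, the double contour integral (−1/(2π²)) ∮_{|ξ₁|=1} ∮_{|ξ₂|=1} (c + r₁ξ₁ + (r₁ξ₁)^{-1})²(c + r₂ξ₂ + (r₂ξ₂)^{-1})² / (ξ₁ − (r₂/r₁)ξ₂)² dξ₁ dξ₂ equals 8c² + 4 in the limit r₁, r₂ ↓ 1 with r₂ > r₁ (in fact equals 8c²·(r₂/r₁ factors) + 4·(r₂/r₁ factors) exactly, with r-dependent factors tending to 1). -/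
open Metric Set Complex

namespace Stmt7Aux

theorem cint_add {f g : ℂ → ℂ} {c : ℂ} {R : ℝ} (hf : CircleIntegrable f c R)
    (hg : CircleIntegrable g c R) :
    (∮ z in C(c, R), (f z + g z)) = (∮ z in C(c, R), f z) + ∮ z in C(c, R), g z := by
  simp only [circleIntegral, smul_add, intervalIntegral.integral_add hf.out hg.out]

theorem ci_inv_pow (A w : ℂ) (hw : ‖w‖ ≠ 1) (n : ℕ) :
    CircleIntegrable (fun z => A * ((z - w) ^ n)⁻¹) 0 1 := by
  refine ContinuousOn.circleIntegrable zero_le_one (continuousOn_const.mul ?_)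
  refine ContinuousOn.inv₀ ((continuousOn_id.sub continuousOn_const).pow n) ?_
  intro z hz
  have hz1 : ‖z‖ = 1 := by simpa using hz
  exact pow_ne_zero _ (sub_ne_zero.mpr (fun h => hw (h ▸ hz1)))

theorem ci_inv (A : ℂ) : CircleIntegrable (fun z => A * z⁻¹) 0 1 := by
  refine ContinuousOn.circleIntegrable zero_le_one (continuousOn_const.mul ?_)
  refine ContinuousOn.inv₀ continuousOn_id ?_
  intro z hz
  have hz1 : ‖z‖ = 1 := by simpa using hz
  intro h; rw [h] at hz1; simp at hz1

theorem ci_inv_out (A w : ℂ) (hw : ‖w‖ ≠ 1) : CircleIntegrable (fun z => A * (z - w)⁻¹) 0 1 := by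
  have := ci_inv_pow A w hw 1
  simpa using this

theorem cint_inv_pow_zero (A w : ℂ) (n : ℕ) (hn : n ≠ 1) :
    (∮ z in C(0, 1), A * ((z - w) ^ n)⁻¹) = 0 := by
  have h : ∀ z : ℂ, A * ((z - w) ^ n)⁻¹ = A * (z - w) ^ (-(n : ℤ)) := fun z => by
    rw [zpow_neg, zpow_natCast]
  simp only [h]
  rw [circleIntegral.integral_const_mul,
    circleIntegral.integral_sub_zpow_of_ne (by omega) 0 w 1, mul_zero]

theorem cint_inv_out_zero (A w : ℂ) (hw : 1 < ‖w‖) :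
    (∮ z in C(0, 1), A * (z - w)⁻¹) = 0 := by
  rw [circleIntegral.integral_const_mul]
  have h0 : (∮ z in C(0, 1), (z - w)⁻¹) = 0 := by
    refine Complex.circleIntegral_eq_zero_of_differentiable_on_off_countable zero_le_one
      countable_empty ?_ ?_
    · refine ContinuousOn.inv₀ (continuousOn_id.sub continuousOn_const) ?_
      intro z hz
      have hz1 : ‖z‖ ≤ 1 := by simpa using hz
      exact sub_ne_zero.mpr (fun h => absurd hw (by rw [← h]; exact not_lt.mpr hz1))
    · intro z hz
      have hz1 : ‖z‖ < 1 := by simpa using hz.1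
      exact (differentiableAt_id.sub (differentiableAt_const w)).inv
        (sub_ne_zero.mpr (fun h => absurd hw (by rw [← show z = w from h]; exact not_lt.mpr hz1.le)))
  rw [h0, mul_zero]

theorem cint_inv_in (A : ℂ) : (∮ z in C(0, 1), A * z⁻¹) = 2 * (Real.pi : ℂ) * Complex.I * A := by
  rw [circleIntegral.integral_const_mul]
  have h0 : (∮ z in C(0, 1), z⁻¹) = 2 * (Real.pi : ℂ) * Complex.I := by
    have := circleIntegral.integral_sub_inv_of_mem_ball (c := (0 : ℂ)) (w := 0) (R := 1)
      (by simp)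
    simpa using this
  rw [h0]; ring

theorem pointwise (K c R w ξ A₁ A₂ B₀ B₁ B₂ : ℂ) (hR : R ≠ 0) (hξ0 : ξ ≠ 0)
    (hξw : ξ - w ≠ 0)
    (key : (c * R * ξ + R ^ 2 * ξ ^ 2 + 1) ^ 2 * K
      = R ^ 2 * (A₁ * (ξ * (ξ - w) ^ 2) + A₂ * (ξ - w) ^ 2 + B₀ * (ξ ^ 2 * (ξ - w) ^ 2)
          + B₁ * (ξ ^ 2 * (ξ - w)) + B₂ * ξ ^ 2)) :
    ((c + R * ξ + (R * ξ)⁻¹) ^ 2 * K) / (ξ - w) ^ 2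
      = A₁ * ξ⁻¹ + (A₂ * ((ξ - 0) ^ (2 : ℕ))⁻¹ + (B₀ * ((ξ - w) ^ (0 : ℕ))⁻¹
          + (B₁ * (ξ - w)⁻¹ + B₂ * ((ξ - w) ^ (2 : ℕ))⁻¹))) := by
  have hRξ : R * ξ ≠ 0 := mul_ne_zero hR hξ0
  have hM2 : (R * ξ) ^ 2 * (ξ - w) ^ 2 ≠ 0 :=
    mul_ne_zero (pow_ne_zero 2 hRξ) (pow_ne_zero 2 hξw)
  have e0 : (R * ξ) * (R * ξ)⁻¹ = 1 := mul_inv_cancel₀ hRξ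
  have e1 : ξ⁻¹ * ξ = 1 := inv_mul_cancel₀ hξ0
  have e2 : (ξ ^ 2)⁻¹ * ξ ^ 2 = 1 := inv_mul_cancel₀ (pow_ne_zero 2 hξ0)
  have e3 : (ξ - w)⁻¹ * (ξ - w) = 1 := inv_mul_cancel₀ hξw
  have e4 : ((ξ - w) ^ 2)⁻¹ * (ξ - w) ^ 2 = 1 := inv_mul_cancel₀ (pow_ne_zero 2 hξw)
  have hL : ((c + R * ξ + (R * ξ)⁻¹) ^ 2 * K) / (ξ - w) ^ 2
      = ((c * R * ξ + R ^ 2 * ξ ^ 2 + 1) ^ 2 * K) / ((R * ξ) ^ 2 * (ξ - w) ^ 2) := by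
    rw [div_eq_div_iff (pow_ne_zero 2 hξw) hM2]
    linear_combination (K * (ξ - w) ^ 2 *
      ((c + R * ξ + (R * ξ)⁻¹) * (R * ξ) + (c * R * ξ + R ^ 2 * ξ ^ 2 + 1))) * e0
  rw [hL, key]
  simp only [sub_zero, pow_zero, inv_one, mul_one]
  rw [div_eq_iff hM2]
  linear_combination (-(A₁ * R ^ 2 * ξ * (ξ - w) ^ 2)) * e1 + (-(A₂ * R ^ 2 * (ξ - w) ^ 2)) * e2
    + (-(B₁ * R ^ 2 * ξ ^ 2 * (ξ - w))) * e3 + (-(B₂ * R ^ 2 * ξ ^ 2)) * e4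

theorem inner_eval (c K w R : ℂ) (hR : R ≠ 0) (hw : 1 < ‖w‖) :
    (∮ ξ in C(0, 1), ((c + R * ξ + (R * ξ)⁻¹) ^ 2 * K) / (ξ - w) ^ 2)
      = 2 * (Real.pi : ℂ) * Complex.I * (K * (2 * c * R * w + 2) / (R ^ 2 * w ^ 3)) := by
  have hw0 : w ≠ 0 := by
    intro h; rw [h, norm_zero] at hw; linarith
  have hw1 : ‖w‖ ≠ 1 := ne_of_gt hw
  have hD : (R ^ 2 * w ^ 3 : ℂ) ≠ 0 := mul_ne_zero (pow_ne_zero 2 hR) (pow_ne_zero 3 hw0)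
  have eD : (R ^ 2 * w ^ 3) * (R ^ 2 * w ^ 3 : ℂ)⁻¹ = 1 := mul_inv_cancel₀ hD
  set A₁ : ℂ := K * (2 * c * R * w + 2) / (R ^ 2 * w ^ 3) with hA₁
  set A₂ : ℂ := K * w / (R ^ 2 * w ^ 3) with hA₂
  set B₀ : ℂ := K * R ^ 2 with hB₀
  set B₁ : ℂ := K * (2 * (c * R * w + R ^ 2 * w ^ 2 + 1) * (c * R + 2 * R ^ 2 * w) * w
      - 2 * (c * R * w + R ^ 2 * w ^ 2 + 1) ^ 2) / (R ^ 2 * w ^ 3) with hB₁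
  set B₂ : ℂ := K * (c * R * w + R ^ 2 * w ^ 2 + 1) ^ 2 * w / (R ^ 2 * w ^ 3) with hB₂
  have key : ∀ ξ : ℂ, (c * R * ξ + R ^ 2 * ξ ^ 2 + 1) ^ 2 * K
      = R ^ 2 * (A₁ * (ξ * (ξ - w) ^ 2) + A₂ * (ξ - w) ^ 2 + B₀ * (ξ ^ 2 * (ξ - w) ^ 2)
          + B₁ * (ξ ^ 2 * (ξ - w)) + B₂ * ξ ^ 2) := by
    intro ξ
    apply mul_left_cancel₀ hD
    rw [hA₁, hA₂, hB₀, hB₁, hB₂]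
    linear_combination (-(R ^ 2 * ((K * (2 * c * R * w + 2)) * (ξ * (ξ - w) ^ 2)
      + (K * w) * (ξ - w) ^ 2
      + (K * (2 * (c * R * w + R ^ 2 * w ^ 2 + 1) * (c * R + 2 * R ^ 2 * w) * w
          - 2 * (c * R * w + R ^ 2 * w ^ 2 + 1) ^ 2)) * (ξ ^ 2 * (ξ - w))
      + (K * (c * R * w + R ^ 2 * w ^ 2 + 1) ^ 2 * w) * ξ ^ 2))) * eD
  have hEq : Set.EqOn (fun ξ : ℂ => ((c + R * ξ + (R * ξ)⁻¹) ^ 2 * K) / (ξ - w) ^ 2)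
      (fun ξ : ℂ => A₁ * ξ⁻¹ + (A₂ * ((ξ - 0) ^ (2 : ℕ))⁻¹ + (B₀ * ((ξ - w) ^ (0 : ℕ))⁻¹
        + (B₁ * (ξ - w)⁻¹ + B₂ * ((ξ - w) ^ (2 : ℕ))⁻¹)))) (sphere 0 1) := by
    intro ξ hξ
    have hξ1 : ‖ξ‖ = 1 := by simpa using hξ
    have hξ0 : ξ ≠ 0 := by intro h; rw [h, norm_zero] at hξ1; simp at hξ1
    have hξw : ξ - w ≠ 0 := sub_ne_zero.mpr (fun h => hw1 (h ▸ hξ1))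
    exact pointwise K c R w ξ A₁ A₂ B₀ B₁ B₂ hR hξ0 hξw (key ξ)
  rw [circleIntegral.integral_congr zero_le_one hEq]
  have i2 : CircleIntegrable (fun z : ℂ => A₂ * ((z - 0) ^ (2 : ℕ))⁻¹) 0 1 :=
    ci_inv_pow A₂ 0 (by simp) 2
  have i3 : CircleIntegrable (fun z : ℂ => B₀ * ((z - w) ^ (0 : ℕ))⁻¹) 0 1 :=
    ci_inv_pow B₀ w hw1 0
  have i4 : CircleIntegrable (fun z : ℂ => B₁ * (z - w)⁻¹) 0 1 := ci_inv_out B₁ w hw1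
  have i5 : CircleIntegrable (fun z : ℂ => B₂ * ((z - w) ^ (2 : ℕ))⁻¹) 0 1 :=
    ci_inv_pow B₂ w hw1 2
  have e1 : (∮ z in C(0, 1), (A₁ * z⁻¹ + (A₂ * ((z - 0) ^ (2 : ℕ))⁻¹ + (B₀ * ((z - w) ^ (0 : ℕ))⁻¹
        + (B₁ * (z - w)⁻¹ + B₂ * ((z - w) ^ (2 : ℕ))⁻¹)))))
      = (∮ z in C(0, 1), A₁ * z⁻¹) + ∮ z in C(0, 1), (A₂ * ((z - 0) ^ (2 : ℕ))⁻¹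
        + (B₀ * ((z - w) ^ (0 : ℕ))⁻¹ + (B₁ * (z - w)⁻¹ + B₂ * ((z - w) ^ (2 : ℕ))⁻¹))) :=
    cint_add (ci_inv A₁) (i2.add (i3.add (i4.add i5)))
  have e2 : (∮ z in C(0, 1), (A₂ * ((z - 0) ^ (2 : ℕ))⁻¹ + (B₀ * ((z - w) ^ (0 : ℕ))⁻¹
        + (B₁ * (z - w)⁻¹ + B₂ * ((z - w) ^ (2 : ℕ))⁻¹))))
      = (∮ z in C(0, 1), A₂ * ((z - 0) ^ (2 : ℕ))⁻¹) + ∮ z in C(0, 1), (B₀ * ((z - w) ^ (0 : ℕ))⁻¹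
        + (B₁ * (z - w)⁻¹ + B₂ * ((z - w) ^ (2 : ℕ))⁻¹)) :=
    cint_add i2 (i3.add (i4.add i5))
  have e3 : (∮ z in C(0, 1), (B₀ * ((z - w) ^ (0 : ℕ))⁻¹
        + (B₁ * (z - w)⁻¹ + B₂ * ((z - w) ^ (2 : ℕ))⁻¹)))
      = (∮ z in C(0, 1), B₀ * ((z - w) ^ (0 : ℕ))⁻¹)
        + ∮ z in C(0, 1), (B₁ * (z - w)⁻¹ + B₂ * ((z - w) ^ (2 : ℕ))⁻¹) :=
    cint_add i3 (i4.add i5)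
  have e4 : (∮ z in C(0, 1), (B₁ * (z - w)⁻¹ + B₂ * ((z - w) ^ (2 : ℕ))⁻¹))
      = (∮ z in C(0, 1), B₁ * (z - w)⁻¹) + ∮ z in C(0, 1), B₂ * ((z - w) ^ (2 : ℕ))⁻¹ :=
    cint_add i4 i5
  rw [e1, e2, e3, e4, cint_inv_in A₁, cint_inv_pow_zero A₂ 0 2 (by norm_num),
    cint_inv_pow_zero B₀ w 0 (by norm_num), cint_inv_out_zero B₁ w hw,
    cint_inv_pow_zero B₂ w 2 (by norm_num)]
  rw [hA₁]; ring

theorem pointwise2 (P c s R₁ a ξ g0 g1 g2 g3 g4 g5 : ℂ) (hs : s ≠ 0) (hR : R₁ ≠ 0)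
    (ha : a ≠ 0) (hξ0 : ξ ≠ 0)
    (key : (c * s * ξ + s ^ 2 * ξ ^ 2 + 1) ^ 2 * (2 * c * R₁ * (a * ξ) + 2) * P
      = (s ^ 2 * R₁ ^ 2 * a ^ 3) * (g5 + g4 * ξ + g3 * ξ ^ 2 + g2 * ξ ^ 3 + g1 * ξ ^ 4
          + g0 * ξ ^ 5)) :
    P * ((c + s * ξ + (s * ξ)⁻¹) ^ 2 * (2 * c * R₁ * (a * ξ) + 2) / (R₁ ^ 2 * (a * ξ) ^ 3))
      = g1 * ξ⁻¹ + (g0 * ((ξ - 0) ^ (0 : ℕ))⁻¹ + (g2 * ((ξ - 0) ^ (2 : ℕ))⁻¹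
          + (g3 * ((ξ - 0) ^ (3 : ℕ))⁻¹ + (g4 * ((ξ - 0) ^ (4 : ℕ))⁻¹
          + g5 * ((ξ - 0) ^ (5 : ℕ))⁻¹)))) := by
  have hsξ : s * ξ ≠ 0 := mul_ne_zero hs hξ0
  have haξ : a * ξ ≠ 0 := mul_ne_zero ha hξ0
  have hY : R₁ ^ 2 * (a * ξ) ^ 3 ≠ 0 := mul_ne_zero (pow_ne_zero 2 hR) (pow_ne_zero 3 haξ)
  have hM : (s * ξ) ^ 2 * (R₁ ^ 2 * (a * ξ) ^ 3) ≠ 0 := mul_ne_zero (pow_ne_zero 2 hsξ) hY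
  have e0 : (s * ξ) * (s * ξ)⁻¹ = 1 := mul_inv_cancel₀ hsξ
  have e1 : ξ⁻¹ * ξ = 1 := inv_mul_cancel₀ hξ0
  have e2 : (ξ ^ 2)⁻¹ * ξ ^ 2 = 1 := inv_mul_cancel₀ (pow_ne_zero 2 hξ0)
  have e3 : (ξ ^ 3)⁻¹ * ξ ^ 3 = 1 := inv_mul_cancel₀ (pow_ne_zero 3 hξ0)
  have e4 : (ξ ^ 4)⁻¹ * ξ ^ 4 = 1 := inv_mul_cancel₀ (pow_ne_zero 4 hξ0)
  have e5 : (ξ ^ 5)⁻¹ * ξ ^ 5 = 1 := inv_mul_cancel₀ (pow_ne_zero 5 hξ0)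
  have hL : P * ((c + s * ξ + (s * ξ)⁻¹) ^ 2 * (2 * c * R₁ * (a * ξ) + 2)
        / (R₁ ^ 2 * (a * ξ) ^ 3))
      = ((c * s * ξ + s ^ 2 * ξ ^ 2 + 1) ^ 2 * (2 * c * R₁ * (a * ξ) + 2) * P)
        / ((s * ξ) ^ 2 * (R₁ ^ 2 * (a * ξ) ^ 3)) := by
    rw [← mul_div_assoc, div_eq_div_iff hY hM]
    linear_combination ((2 * c * R₁ * (a * ξ) + 2) * P * (R₁ ^ 2 * (a * ξ) ^ 3)
      * ((c + s * ξ + (s * ξ)⁻¹) * (s * ξ) + (c * s * ξ + s ^ 2 * ξ ^ 2 + 1))) * e0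
  rw [hL, key]
  simp only [sub_zero, pow_zero, inv_one, mul_one]
  rw [div_eq_iff hM]
  linear_combination (-(g1 * s ^ 2 * R₁ ^ 2 * a ^ 3 * ξ ^ 4)) * e1
    + (-(g2 * s ^ 2 * R₁ ^ 2 * a ^ 3 * ξ ^ 3)) * e2
    + (-(g3 * s ^ 2 * R₁ ^ 2 * a ^ 3 * ξ ^ 2)) * e3
    + (-(g4 * s ^ 2 * R₁ ^ 2 * a ^ 3 * ξ)) * e4
    + (-(g5 * s ^ 2 * R₁ ^ 2 * a ^ 3)) * e5

theorem outer_eval (c s R₁ a : ℂ) (hs : s ≠ 0) (hR : R₁ ≠ 0) (ha1 : 1 < ‖a‖) :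
    (∮ ξ₂ in C(0, 1), ∮ ξ₁ in C(0, 1),
        (c + R₁ * ξ₁ + (R₁ * ξ₁)⁻¹) ^ 2 * (c + s * ξ₂ + (s * ξ₂)⁻¹) ^ 2 / (ξ₁ - a * ξ₂) ^ 2)
      = 2 * (Real.pi : ℂ) * Complex.I * ((2 * s ^ 4 + 4 * c ^ 2 * R₁ * a * s ^ 3)
          * (2 * (Real.pi : ℂ) * Complex.I) / (s ^ 2 * R₁ ^ 2 * a ^ 3)) := by
  have ha0 : a ≠ 0 := by intro h; rw [h, norm_zero] at ha1; linarith
  set P : ℂ := 2 * (Real.pi : ℂ) * Complex.I with hP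
  have hEqO : Set.EqOn (fun ξ₂ : ℂ => ∮ ξ₁ in C(0, 1),
        (c + R₁ * ξ₁ + (R₁ * ξ₁)⁻¹) ^ 2 * (c + s * ξ₂ + (s * ξ₂)⁻¹) ^ 2 / (ξ₁ - a * ξ₂) ^ 2)
      (fun ξ₂ : ℂ => P * ((c + s * ξ₂ + (s * ξ₂)⁻¹) ^ 2 * (2 * c * R₁ * (a * ξ₂) + 2)
        / (R₁ ^ 2 * (a * ξ₂) ^ 3))) (sphere 0 1) := by
    intro ξ hξ
    have hξ1 : ‖ξ‖ = 1 := by simpa using hξ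
    have hnorm : 1 < ‖a * ξ‖ := by rw [norm_mul, hξ1, mul_one]; exact ha1
    exact inner_eval c ((c + s * ξ + (s * ξ)⁻¹) ^ 2) (a * ξ) R₁ hR hnorm
  rw [circleIntegral.integral_congr zero_le_one hEqO]
  have hD : (s ^ 2 * R₁ ^ 2 * a ^ 3 : ℂ) ≠ 0 :=
    mul_ne_zero (mul_ne_zero (pow_ne_zero 2 hs) (pow_ne_zero 2 hR)) (pow_ne_zero 3 ha0)
  have eD : (s ^ 2 * R₁ ^ 2 * a ^ 3) * (s ^ 2 * R₁ ^ 2 * a ^ 3 : ℂ)⁻¹ = 1 := mul_inv_cancel₀ hD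
  set g5 : ℂ := 2 * P / (s ^ 2 * R₁ ^ 2 * a ^ 3) with hg5
  set g4 : ℂ := (4 * c * s + 2 * c * R₁ * a) * P / (s ^ 2 * R₁ ^ 2 * a ^ 3) with hg4
  set g3 : ℂ := (2 * c ^ 2 * s ^ 2 + 4 * s ^ 2 + 4 * c ^ 2 * R₁ * a * s) * P
      / (s ^ 2 * R₁ ^ 2 * a ^ 3) with hg3
  set g2 : ℂ := (4 * c * s ^ 3 + 2 * c * R₁ * a * (c ^ 2 * s ^ 2 + 2 * s ^ 2)) * P
      / (s ^ 2 * R₁ ^ 2 * a ^ 3) with hg2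
  set g1 : ℂ := (2 * s ^ 4 + 4 * c ^ 2 * R₁ * a * s ^ 3) * P / (s ^ 2 * R₁ ^ 2 * a ^ 3) with hg1
  set g0 : ℂ := 2 * c * R₁ * a * s ^ 4 * P / (s ^ 2 * R₁ ^ 2 * a ^ 3) with hg0
  have key : ∀ ξ : ℂ, (c * s * ξ + s ^ 2 * ξ ^ 2 + 1) ^ 2 * (2 * c * R₁ * (a * ξ) + 2) * P
      = (s ^ 2 * R₁ ^ 2 * a ^ 3) * (g5 + g4 * ξ + g3 * ξ ^ 2 + g2 * ξ ^ 3 + g1 * ξ ^ 4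
          + g0 * ξ ^ 5) := by
    intro ξ
    apply mul_left_cancel₀ hD
    rw [hg5, hg4, hg3, hg2, hg1, hg0]
    linear_combination (-((s ^ 2 * R₁ ^ 2 * a ^ 3) * ((2 * P)
      + ((4 * c * s + 2 * c * R₁ * a) * P) * ξ
      + ((2 * c ^ 2 * s ^ 2 + 4 * s ^ 2 + 4 * c ^ 2 * R₁ * a * s) * P) * ξ ^ 2
      + ((4 * c * s ^ 3 + 2 * c * R₁ * a * (c ^ 2 * s ^ 2 + 2 * s ^ 2)) * P) * ξ ^ 3
      + ((2 * s ^ 4 + 4 * c ^ 2 * R₁ * a * s ^ 3) * P) * ξ ^ 4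
      + (2 * c * R₁ * a * s ^ 4 * P) * ξ ^ 5))) * eD
  have hEq2 : Set.EqOn (fun ξ : ℂ => P * ((c + s * ξ + (s * ξ)⁻¹) ^ 2
        * (2 * c * R₁ * (a * ξ) + 2) / (R₁ ^ 2 * (a * ξ) ^ 3)))
      (fun ξ : ℂ => g1 * ξ⁻¹ + (g0 * ((ξ - 0) ^ (0 : ℕ))⁻¹ + (g2 * ((ξ - 0) ^ (2 : ℕ))⁻¹
        + (g3 * ((ξ - 0) ^ (3 : ℕ))⁻¹ + (g4 * ((ξ - 0) ^ (4 : ℕ))⁻¹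
        + g5 * ((ξ - 0) ^ (5 : ℕ))⁻¹))))) (sphere 0 1) := by
    intro ξ hξ
    have hξ1 : ‖ξ‖ = 1 := by simpa using hξ
    have hξ0 : ξ ≠ 0 := by intro h; rw [h, norm_zero] at hξ1; simp at hξ1
    exact pointwise2 P c s R₁ a ξ g0 g1 g2 g3 g4 g5 hs hR ha0 hξ0 (key ξ)
  rw [circleIntegral.integral_congr zero_le_one hEq2]
  have i2 : CircleIntegrable (fun z : ℂ => g0 * ((z - 0) ^ (0 : ℕ))⁻¹) 0 1 :=
    ci_inv_pow g0 0 (by simp) 0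
  have i3 : CircleIntegrable (fun z : ℂ => g2 * ((z - 0) ^ (2 : ℕ))⁻¹) 0 1 :=
    ci_inv_pow g2 0 (by simp) 2
  have i4 : CircleIntegrable (fun z : ℂ => g3 * ((z - 0) ^ (3 : ℕ))⁻¹) 0 1 :=
    ci_inv_pow g3 0 (by simp) 3
  have i5 : CircleIntegrable (fun z : ℂ => g4 * ((z - 0) ^ (4 : ℕ))⁻¹) 0 1 :=
    ci_inv_pow g4 0 (by simp) 4
  have i6 : CircleIntegrable (fun z : ℂ => g5 * ((z - 0) ^ (5 : ℕ))⁻¹) 0 1 :=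
    ci_inv_pow g5 0 (by simp) 5
  have f1 : (∮ z in C(0, 1), (g1 * z⁻¹ + (g0 * ((z - 0) ^ (0 : ℕ))⁻¹ + (g2 * ((z - 0) ^ (2 : ℕ))⁻¹
        + (g3 * ((z - 0) ^ (3 : ℕ))⁻¹ + (g4 * ((z - 0) ^ (4 : ℕ))⁻¹
        + g5 * ((z - 0) ^ (5 : ℕ))⁻¹))))))
      = (∮ z in C(0, 1), g1 * z⁻¹) + ∮ z in C(0, 1), (g0 * ((z - 0) ^ (0 : ℕ))⁻¹
        + (g2 * ((z - 0) ^ (2 : ℕ))⁻¹ + (g3 * ((z - 0) ^ (3 : ℕ))⁻¹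
        + (g4 * ((z - 0) ^ (4 : ℕ))⁻¹ + g5 * ((z - 0) ^ (5 : ℕ))⁻¹)))) :=
    cint_add (ci_inv g1) (i2.add (i3.add (i4.add (i5.add i6))))
  have f2 : (∮ z in C(0, 1), (g0 * ((z - 0) ^ (0 : ℕ))⁻¹ + (g2 * ((z - 0) ^ (2 : ℕ))⁻¹
        + (g3 * ((z - 0) ^ (3 : ℕ))⁻¹ + (g4 * ((z - 0) ^ (4 : ℕ))⁻¹
        + g5 * ((z - 0) ^ (5 : ℕ))⁻¹)))))
      = (∮ z in C(0, 1), g0 * ((z - 0) ^ (0 : ℕ))⁻¹) + ∮ z in C(0, 1), (g2 * ((z - 0) ^ (2 : ℕ))⁻¹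
        + (g3 * ((z - 0) ^ (3 : ℕ))⁻¹ + (g4 * ((z - 0) ^ (4 : ℕ))⁻¹
        + g5 * ((z - 0) ^ (5 : ℕ))⁻¹))) :=
    cint_add i2 (i3.add (i4.add (i5.add i6)))
  have f3 : (∮ z in C(0, 1), (g2 * ((z - 0) ^ (2 : ℕ))⁻¹ + (g3 * ((z - 0) ^ (3 : ℕ))⁻¹
        + (g4 * ((z - 0) ^ (4 : ℕ))⁻¹ + g5 * ((z - 0) ^ (5 : ℕ))⁻¹))))
      = (∮ z in C(0, 1), g2 * ((z - 0) ^ (2 : ℕ))⁻¹) + ∮ z in C(0, 1), (g3 * ((z - 0) ^ (3 : ℕ))⁻¹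
        + (g4 * ((z - 0) ^ (4 : ℕ))⁻¹ + g5 * ((z - 0) ^ (5 : ℕ))⁻¹)) :=
    cint_add i3 (i4.add (i5.add i6))
  have f4 : (∮ z in C(0, 1), (g3 * ((z - 0) ^ (3 : ℕ))⁻¹ + (g4 * ((z - 0) ^ (4 : ℕ))⁻¹
        + g5 * ((z - 0) ^ (5 : ℕ))⁻¹)))
      = (∮ z in C(0, 1), g3 * ((z - 0) ^ (3 : ℕ))⁻¹) + ∮ z in C(0, 1), (g4 * ((z - 0) ^ (4 : ℕ))⁻¹
        + g5 * ((z - 0) ^ (5 : ℕ))⁻¹) :=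
    cint_add i4 (i5.add i6)
  have f5 : (∮ z in C(0, 1), (g4 * ((z - 0) ^ (4 : ℕ))⁻¹ + g5 * ((z - 0) ^ (5 : ℕ))⁻¹))
      = (∮ z in C(0, 1), g4 * ((z - 0) ^ (4 : ℕ))⁻¹)
        + ∮ z in C(0, 1), g5 * ((z - 0) ^ (5 : ℕ))⁻¹ :=
    cint_add i5 i6
  rw [f1, f2, f3, f4, f5, cint_inv_in g1, cint_inv_pow_zero g0 0 0 (by norm_num),
    cint_inv_pow_zero g2 0 2 (by norm_num), cint_inv_pow_zero g3 0 3 (by norm_num),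
    cint_inv_pow_zero g4 0 4 (by norm_num), cint_inv_pow_zero g5 0 5 (by norm_num)]
  rw [hg1, hP]; ring

end Stmt7Aux


open Stmt7Aux in
/-- The variance double contour integral for the quadratic test function tends to
`8c² + 4` as `r₁, r₂ ↓ 1` with `r₂ > r₁ > 1`. -/
theorem stmt7 (c : ℝ) :
    ∀ ε : ℝ, 0 < ε → ∃ δ : ℝ, 0 < δ ∧ ∀ r₁ r₂ : ℝ, 1 < r₁ → r₁ < r₂ → r₂ < 1 + δ →
      ‖(-1 / (2 * (Real.pi : ℂ) ^ 2)) *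
        (∮ ξ₂ in C(0, 1), ∮ ξ₁ in C(0, 1),
          ((c : ℂ) + (r₁ : ℂ) * ξ₁ + ((r₁ : ℂ) * ξ₁)⁻¹) ^ 2 *
            ((c : ℂ) + (r₂ : ℂ) * ξ₂ + ((r₂ : ℂ) * ξ₂)⁻¹) ^ 2 /
            (ξ₁ - ((r₂ / r₁ : ℝ) : ℂ) * ξ₂) ^ 2) - ((8 * c ^ 2 + 4 : ℝ) : ℂ)‖ < ε := by
  intro ε hε
  refine ⟨ε / (8 * c ^ 2 + 5), by positivity, ?_⟩
  intro r₁ r₂ h1 h12 h2δ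
  have hr₁0 : (0 : ℝ) < r₁ := by linarith
  have hr₂0 : (0 : ℝ) < r₂ := by linarith
  have hR : ((r₁ : ℂ)) ≠ 0 := Complex.ofReal_ne_zero.mpr (ne_of_gt hr₁0)
  have hs : ((r₂ : ℂ)) ≠ 0 := Complex.ofReal_ne_zero.mpr (ne_of_gt hr₂0)
  have hπ : ((Real.pi : ℝ) : ℂ) ≠ 0 := Complex.ofReal_ne_zero.mpr Real.pi_ne_zero
  have ha1 : 1 < ‖((r₂ / r₁ : ℝ) : ℂ)‖ := by
    rw [Complex.norm_real, Real.norm_eq_abs, abs_of_pos (by positivity)]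
    rw [lt_div_iff₀ hr₁0]; linarith
  rw [outer_eval (c : ℂ) (r₂ : ℂ) (r₁ : ℂ) ((r₂ / r₁ : ℝ) : ℂ) hs hR ha1]
  have haC : ((r₂ / r₁ : ℝ) : ℂ) = (r₂ : ℂ) / (r₁ : ℂ) := by push_cast; ring
  have hI : (Complex.I) ^ 2 = -1 := Complex.I_sq
  have hval : (-1 / (2 * (Real.pi : ℂ) ^ 2)) *
      (2 * (Real.pi : ℂ) * Complex.I * ((2 * (r₂ : ℂ) ^ 4
        + 4 * (c : ℂ) ^ 2 * (r₁ : ℂ) * ((r₂ / r₁ : ℝ) : ℂ) * (r₂ : ℂ) ^ 3)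
          * (2 * (Real.pi : ℂ) * Complex.I)
          / ((r₂ : ℂ) ^ 2 * (r₁ : ℂ) ^ 2 * ((r₂ / r₁ : ℝ) : ℂ) ^ 3)))
      = (((8 * c ^ 2 + 4) * (r₁ / r₂) : ℝ) : ℂ) := by
    rw [haC]
    push_cast
    field_simp
    have hden : (2 * (Real.pi : ℂ) ^ 2 * ((r₁ : ℂ) * ((r₂ : ℂ) ^ 2 * (r₁ : ℂ) ^ 2
        * (r₂ : ℂ) ^ 3))) ≠ 0 :=
      mul_ne_zero (mul_ne_zero two_ne_zero (pow_ne_zero 2 hπ))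
        (mul_ne_zero hR (mul_ne_zero (mul_ne_zero (pow_ne_zero 2 hs) (pow_ne_zero 2 hR))
          (pow_ne_zero 3 hs)))
    linear_combination (-(2 * (2 + 4 * (c : ℂ) ^ 2))) * hI
  rw [hval]
  rw [← Complex.ofReal_sub, Complex.norm_real, Real.norm_eq_abs]
  have hlt : r₁ / r₂ < 1 := by rw [div_lt_one hr₂0]; exact h12
  have hnn : (0 : ℝ) ≤ 8 * c ^ 2 + 4 := by positivity
  have habs : |(8 * c ^ 2 + 4) * (r₁ / r₂) - (8 * c ^ 2 + 4)| =
      (8 * c ^ 2 + 4) * (1 - r₁ / r₂) := by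
    rw [abs_of_nonpos (by nlinarith [mul_le_of_le_one_right hnn hlt.le])]; ring
  rw [habs]
  have hfrac : 1 - r₁ / r₂ = (r₂ - r₁) / r₂ := by field_simp
  have hd : 0 < ε / (8 * c ^ 2 + 5) := by positivity
  have hδ : (r₂ - r₁) / r₂ < ε / (8 * c ^ 2 + 5) := by
    rw [div_lt_iff₀ hr₂0]
    nlinarith [mul_pos hd (show (0:ℝ) < r₂ - 1 by linarith)]
  rw [hfrac]
  have hnn2 : (0:ℝ) ≤ (r₂ - r₁) / r₂ := div_nonneg (by linarith) hr₂0.le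
  calc (8 * c ^ 2 + 4) * ((r₂ - r₁) / r₂) < (8 * c ^ 2 + 5) * (ε / (8 * c ^ 2 + 5)) := by
        nlinarith [mul_le_mul_of_nonneg_left hδ.le hnn]
    _ = ε := by
        field_simp
end

section
/- For t > 1 and r > 1 with r < t, the contour integral (−1/(2πi)) ∮_{|ξ|=1} log(t + rξ) · (1/ξ − ½/(ξ + 1/r) − ½/(ξ − 1/r)) dξ equals −(log t − ½ log(t−1) − ½ log(t+1)) = ½ log(1 − 1/t²). -/
open Complex Metric

lemma aux_slit (t r : ℝ) (hr : 1 < r) (hrt : r < t) {ξ : ℂ} (hξ : ξ ∈ closedBall (0:ℂ) 1) :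
    (t : ℂ) + (r : ℂ) * ξ ∈ Complex.slitPlane := by
  rw [mem_closedBall, dist_zero_right] at hξ
  refine Complex.mem_slitPlane_iff.mpr (Or.inl ?_)
  have hre : |ξ.re| ≤ 1 := le_trans (Complex.abs_re_le_norm ξ) hξ
  have : ((t : ℂ) + (r : ℂ) * ξ).re = t + r * ξ.re := by simp
  rw [this]
  nlinarith [abs_le.mp hre]

lemma CircleIntegrable.sub' {f g : ℂ → ℂ} {c : ℂ} {R : ℝ}
    (hf : CircleIntegrable f c R) (hg : CircleIntegrable g c R) :
    CircleIntegrable (f - g) c R := by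
  simpa [sub_eq_add_neg] using hf.add hg.neg

lemma CircleIntegrable.smul' {f : ℂ → ℂ} {c : ℂ} {R : ℝ} (a : ℂ)
    (hf : CircleIntegrable f c R) :
    CircleIntegrable (a • f) c R := by
  exact IntervalIntegrable.smul hf a

lemma aux_cauchy (t r : ℝ) (hr : 1 < r) (hrt : r < t) {w : ℂ} (hw : w ∈ ball (0:ℂ) 1) :
    (∮ ξ in C(0, 1), (ξ - w)⁻¹ • Complex.log ((t : ℂ) + (r : ℂ) * ξ)) =
      (2 * Real.pi * I : ℂ) • Complex.log ((t : ℂ) + (r : ℂ) * w) := by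
  refine DiffContOnCl.circleIntegral_sub_inv_smul ?_ hw
  have hd : DifferentiableOn ℂ (fun ξ => Complex.log ((t : ℂ) + (r : ℂ) * ξ))
      (closedBall (0:ℂ) 1) := by
    intro ξ hξ
    exact ((Complex.differentiableAt_log (aux_slit t r hr hrt hξ)).comp (f := fun ξ : ℂ => (t : ℂ) + (r : ℂ) * ξ) ξ
      (by fun_prop)).differentiableWithinAt
  exact DifferentiableOn.diffContOnCl (by rwa [closure_ball (0:ℂ) one_ne_zero])

/-- The logarithmic mean contour integral computes `½ log(1 - 1/t²)`. -/
theorem stmt8 (t r : ℝ) (ht : 1 < t) (hr : 1 < r) (hrt : r < t) :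
    (-1 / (2 * (Real.pi : ℂ) * Complex.I)) *
        (∮ ξ in C(0, 1), Complex.log ((t : ℂ) + (r : ℂ) * ξ) *
          (1 / ξ - (1 / 2) * (1 / (ξ + 1 / (r : ℂ))) - (1 / 2) * (1 / (ξ - 1 / (r : ℂ))))) =
      ((-(Real.log t - (1 / 2) * Real.log (t - 1) - (1 / 2) * Real.log (t + 1)) : ℝ) : ℂ) ∧
    ((-(Real.log t - (1 / 2) * Real.log (t - 1) - (1 / 2) * Real.log (t + 1)) : ℝ) : ℂ) =
      (((1 / 2) * Real.log (1 - 1 / t ^ 2) : ℝ) : ℂ) := by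
  have hr0 : (0:ℝ) < r := by linarith
  have hrC : (r : ℂ) ≠ 0 := by exact_mod_cast hr0.ne'
  have hinv : ‖(1 / (r : ℂ))‖ < 1 := by
    rw [norm_div]
    simp only [norm_one, Complex.norm_real, Real.norm_eq_abs, abs_of_pos hr0]
    rw [div_lt_one hr0]; linarith
  -- membership of poles
  have h0 : (0 : ℂ) ∈ ball (0:ℂ) 1 := by simp
  have h1 : (-(1 / (r:ℂ))) ∈ ball (0:ℂ) 1 := by
    simpa [mem_ball, dist_zero_right] using hinv
  have h2 : ((1 / (r:ℂ))) ∈ ball (0:ℂ) 1 := by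
    simpa [mem_ball, dist_zero_right] using hinv
  -- integrability
  have hcont : ∀ w : ℂ, w ∈ ball (0:ℂ) 1 →
      CircleIntegrable (fun ξ => (ξ - w)⁻¹ • Complex.log ((t : ℂ) + (r : ℂ) * ξ)) 0 1 := by
    intro w hw
    apply ContinuousOn.circleIntegrable zero_le_one
    apply ContinuousOn.smul (f := fun ξ : ℂ => (ξ - w)⁻¹) (g := fun ξ : ℂ => Complex.log ((t : ℂ) + (r : ℂ) * ξ))
    · apply ContinuousOn.inv₀ (by fun_prop)
      intro ξ hξ
      have : ξ ≠ w := by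
        rintro rfl
        rw [mem_sphere_zero_iff_norm] at hξ
        rw [mem_ball, dist_zero_right] at hw
        exact absurd hξ hw.ne
      simpa [sub_eq_zero] using this
    · refine ContinuousOn.clog (by fun_prop) ?_
      intro ξ hξ
      exact aux_slit t r hr hrt (sphere_subset_closedBall hξ)
  -- split the integral
  have key : (∮ ξ in C(0, 1), Complex.log ((t : ℂ) + (r : ℂ) * ξ) *
        (1 / ξ - (1 / 2) * (1 / (ξ + 1 / (r : ℂ))) - (1 / 2) * (1 / (ξ - 1 / (r : ℂ))))) =
      (∮ ξ in C(0, 1), (ξ - 0)⁻¹ • Complex.log ((t : ℂ) + (r : ℂ) * ξ))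
        - (1/2 : ℂ) • (∮ ξ in C(0, 1), (ξ - (-(1 / (r:ℂ))))⁻¹ • Complex.log ((t : ℂ) + (r : ℂ) * ξ))
        - (1/2 : ℂ) • (∮ ξ in C(0, 1), (ξ - (1 / (r:ℂ)))⁻¹ • Complex.log ((t : ℂ) + (r : ℂ) * ξ)) := by
    have step1 : (∮ ξ in C(0, 1), Complex.log ((t : ℂ) + (r : ℂ) * ξ) *
        (1 / ξ - (1 / 2) * (1 / (ξ + 1 / (r : ℂ))) - (1 / 2) * (1 / (ξ - 1 / (r : ℂ))))) =
        ∮ ξ in C(0, 1), ((ξ - 0)⁻¹ • Complex.log ((t : ℂ) + (r : ℂ) * ξ)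
          - (1/2 : ℂ) • ((ξ - (-(1 / (r:ℂ))))⁻¹ • Complex.log ((t : ℂ) + (r : ℂ) * ξ))
          - (1/2 : ℂ) • ((ξ - (1 / (r:ℂ)))⁻¹ • Complex.log ((t : ℂ) + (r : ℂ) * ξ))) := by
      apply circleIntegral.integral_congr zero_le_one
      intro ξ _
      simp only [smul_eq_mul, sub_zero, sub_neg_eq_add]
      ring
    have hA : CircleIntegrable (fun ξ : ℂ => (ξ - 0)⁻¹ • Complex.log ((t : ℂ) + (r : ℂ) * ξ)
          - (1/2 : ℂ) • ((ξ - (-(1 / (r:ℂ))))⁻¹ • Complex.log ((t : ℂ) + (r : ℂ) * ξ))) 0 1 :=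
      (hcont 0 h0).sub' (CircleIntegrable.smul' (1/2 : ℂ) (hcont _ h1))
    have hC : CircleIntegrable (fun ξ : ℂ =>
          (1/2 : ℂ) • ((ξ - (1 / (r:ℂ)))⁻¹ • Complex.log ((t : ℂ) + (r : ℂ) * ξ))) 0 1 :=
      CircleIntegrable.smul' (1/2 : ℂ) (hcont _ h2)
    have hB : CircleIntegrable (fun ξ : ℂ =>
          (1/2 : ℂ) • ((ξ - (-(1 / (r:ℂ))))⁻¹ • Complex.log ((t : ℂ) + (r : ℂ) * ξ))) 0 1 :=
      CircleIntegrable.smul' (1/2 : ℂ) (hcont _ h1)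
    rw [step1, circleIntegral.integral_sub hA hC, circleIntegral.integral_sub (hcont 0 h0) hB,
      circleIntegral.integral_smul, circleIntegral.integral_smul]
  have e0 := aux_cauchy t r hr hrt h0
  have e1 := aux_cauchy t r hr hrt h1
  have e2 := aux_cauchy t r hr hrt h2
  have v0 : (t : ℂ) + (r : ℂ) * 0 = ((t : ℝ) : ℂ) := by ring
  have v1 : (t : ℂ) + (r : ℂ) * (-(1 / (r:ℂ))) = (((t - 1 : ℝ)) : ℂ) := by
    push_cast; field_simp; try ring
  have v2 : (t : ℂ) + (r : ℂ) * (1 / (r:ℂ)) = (((t + 1 : ℝ)) : ℂ) := by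
    push_cast; field_simp; try ring
  rw [v0, ← Complex.ofReal_log (by linarith : (0:ℝ) ≤ t)] at e0
  rw [v1, ← Complex.ofReal_log (by linarith : (0:ℝ) ≤ t - 1)] at e1
  rw [v2, ← Complex.ofReal_log (by linarith : (0:ℝ) ≤ t + 1)] at e2
  have hπ : (2 * (Real.pi : ℂ) * Complex.I) ≠ 0 := by
    simp [Real.pi_ne_zero, Complex.I_ne_zero]
  constructor
  · rw [key, e0, e1, e2]
    simp only [smul_eq_mul]
    field_simp
    push_cast
    ring
  · congr 1
    have ht0 : (0:ℝ) < t := by linarith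
    have h1 : (0:ℝ) < t - 1 := by linarith
    have h2 : (0:ℝ) < t + 1 := by linarith
    have : 1 - 1 / t ^ 2 = (t - 1) * (t + 1) / t ^ 2 := by
      field_simp; ring
    rw [this, Real.log_div (by positivity) (by positivity),
      Real.log_mul h1.ne' h2.ne', Real.log_pow]
    push_cast
    ring
end
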